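/- arXiv:1507.05674 — 4 statements merged into one kernel-verified Lean document; each statement's English description precedes it below -/
import Mathlib

section
/- The action I±(e) tends to 4/π as e tends to 2 from above: lim_{e→2⁺} I±(e) = 4/π, which is one half of lim_{e→2⁻} I₀(e) = 8/π. -/
/-!
Both actions are continuous in `e` on all of `ℝ`: the integrand is jointly continuous and the
endpoints `±π`, `±arccos (1 - e)` are continuous, with `arccos (1 - 2) = π`. So both limits are
the value at `e = 2`, where `√(2 (1 + cos α)) = 2 cos (α / 2)` on `[-π, π]` integrates to `8`.
-/

open Real intervalIntegral Filter Topology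

theorem continuous_intervalIntegral_of_continuous_uncurry {X E : Type*} [TopologicalSpace X]
    [NormedAddCommGroup E] [NormedSpace ℝ E] {f : X → ℝ → E} (hf : Continuous f.uncurry)
    {a b : X → ℝ} (ha : Continuous a) (hb : Continuous b) :
    Continuous fun x ↦ ∫ t in a x..b x, f x t := by
  have hint (x : X) (c d : ℝ) : IntervalIntegrable (f x) MeasureTheory.volume c d :=
    (hf.uncurry_left x).intervalIntegrable c d
  have hsplit : (fun x ↦ ∫ t in a x..b x, f x t) =
      fun x ↦ (∫ t in 0..b x, f x t) - ∫ t in 0..a x, f x t :=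
    funext fun x ↦ (integral_interval_sub_left (hint x 0 _) (hint x 0 _)).symm
  rw [hsplit]
  exact (continuous_parametric_intervalIntegral_of_continuous hf hb).sub
    (continuous_parametric_intervalIntegral_of_continuous hf ha)

theorem sqrt_two_add_two_cos {α : ℝ} (hα : α ∈ Set.Icc (-π) π) :
    √(2 * (1 + cos α)) = 2 * cos (α / 2) := by
  have hcos : 0 ≤ cos (α / 2) := cos_nonneg_of_mem_Icc ⟨by linarith [hα.1], by linarith [hα.2]⟩
  rw [← sqrt_sq (by positivity : 0 ≤ 2 * cos (α / 2))]
  congr 1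
  have := cos_sq (α / 2)
  rw [mul_div_cancel₀ α two_ne_zero] at this
  linear_combination -4 * this

theorem integral_sqrt_two_add_two_cos : ∫ α in -π..π, √(2 * (1 + cos α)) = 8 := by
  have hpi : -π ≤ π := by linarith [pi_pos]
  rw [integral_congr fun α hα ↦ sqrt_two_add_two_cos (Set.uIcc_of_le hpi ▸ hα),
    integral_const_mul, integral_comp_div (fun α ↦ cos α) two_ne_zero, integral_cos]
  norm_num [neg_div]

theorem tendsto_mul_integral_sqrt_energy {a : ℝ → ℝ} (ha : Continuous a) (ha₂ : a 2 = π)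
    (c : ℝ) (s : Set ℝ) :
    Tendsto (fun e ↦ c * ∫ α in -a e..a e, √(2 * (e - 1 + cos α))) (𝓝[s] 2) (𝓝 (c * 8)) := by
  have hf : Continuous (Function.uncurry fun e α : ℝ ↦ √(2 * (e - 1 + cos α))) := by fun_prop
  have h₂ : ∫ α in -a 2..a 2, √(2 * (2 - 1 + cos α)) = 8 := by
    rw [ha₂, ← integral_sqrt_two_add_two_cos]
    norm_num
  have hcont := (continuous_intervalIntegral_of_continuous_uncurry hf (a := fun e ↦ -a e)
    (by fun_prop) ha).const_mul c
  simpa only [h₂] using (hcont.tendsto 2).mono_left (nhdsWithin_le_nhds (s := s))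

/-- `I±(e) → 4/π` as `e → 2⁺`, which is one half of `lim_{e→2⁻} I₀(e) = 8/π`. -/
theorem stmt_5 :
    Filter.Tendsto
      (fun e : ℝ => (1 / (2 * Real.pi)) *
        ∫ α in (-Real.pi)..Real.pi, Real.sqrt (2 * (e - 1 + Real.cos α)))
      (nhdsWithin 2 (Set.Ioi 2)) (nhds (4 / Real.pi)) ∧
    Filter.Tendsto
      (fun e : ℝ => (1 / Real.pi) *
        ∫ α in (-Real.arccos (1 - e))..(Real.arccos (1 - e)),
          Real.sqrt (2 * (e - 1 + Real.cos α)))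
      (nhdsWithin 2 (Set.Ioo 0 2)) (nhds (8 / Real.pi)) ∧
    (4 / Real.pi : ℝ) = (1 / 2) * (8 / Real.pi) := by
  have hI := tendsto_mul_integral_sqrt_energy continuous_const rfl (1 / (2 * π)) (Set.Ioi 2)
  have hI₀ := tendsto_mul_integral_sqrt_energy (a := fun e ↦ arccos (1 - e)) (by fun_prop)
    (by norm_num) (1 / π) (Set.Ioo 0 2)
  refine ⟨?_, ?_, by ring⟩
  · convert hI using 2
    field_simp
    norm_num
  · convert hI₀ using 2
    ring
end

section
/- The total action function I: (0,∞) → ℝ, defined by I(e) = I₀(e) for 0 < e < 2, I(2) = 8/π, and I(e) = 2·I±(e) for e > 2, is continuous at e = 2 (and hence continuous on (0,∞)). -/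
/-!
Since `arccos (1 - e) = π` as soon as `e ≥ 2`, the formula for `I₀` extends to all `e` and covers
the case `e > 2` as well: `I` agrees on `(0, ∞)` with the single function
`e ↦ (1/π) ∫_{-arccos(1-e)}^{arccos(1-e)} √(2(e - 1 + cos α)) dα`, the value `8/π` at `e = 2`
coming from `√(2(1 + cos α)) = 2 cos(α/2)` on `[-π, π]`. That function is continuous, being a
parametric integral of a jointly continuous integrand between continuous bounds.
-/

open Real Set MeasureTheory intervalIntegral

theorem intervalIntegral.continuous_parametric_of_continuous_bounds
    {X E : Type*} [TopologicalSpace X] [NormedAddCommGroup E] [NormedSpace ℝ E]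
    {μ : Measure ℝ} [IsLocallyFiniteMeasure μ] [NullSingletonClass μ] {f : X → ℝ → E} (hf : Continuous f.uncurry)
    {a b : X → ℝ} (ha : Continuous a) (hb : Continuous b) :
    Continuous fun x ↦ ∫ t in a x..b x, f x t ∂μ := by
  have hsplit : ∀ x, ∫ t in a x..b x, f x t ∂μ =
      (∫ t in (0 : ℝ)..b x, f x t ∂μ) - ∫ t in (0 : ℝ)..a x, f x t ∂μ := fun x ↦
    (integral_interval_sub_left ((hf.uncurry_left x).intervalIntegrable _ _)
      ((hf.uncurry_left x).intervalIntegrable _ _)).symm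
  simp only [hsplit]
  exact (continuous_parametric_intervalIntegral_of_continuous hf hb).sub
    (continuous_parametric_intervalIntegral_of_continuous hf ha)

theorem Real.sqrt_two_mul_one_add_cos {α : ℝ} (hα : α ∈ Icc (-π) π) :
    √(2 * (1 + cos α)) = 2 * cos (α / 2) := by
  have hcos : 0 ≤ cos (α / 2) :=
    cos_nonneg_of_mem_Icc ⟨by linarith [hα.1], by linarith [hα.2]⟩
  have hsq : 2 * (1 + cos α) = (2 * cos (α / 2)) ^ 2 := by
    rw [mul_pow, cos_sq, mul_div_cancel₀ _ two_ne_zero]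
    ring
  rw [hsq, sqrt_sq (by positivity)]

theorem Real.integral_sqrt_two_mul_one_add_cos :
    ∫ α in (-π)..π, √(2 * (1 + cos α)) = 8 := by
  rw [integral_congr (g := fun α ↦ 2 * cos (α / 2)) fun α hα ↦
      sqrt_two_mul_one_add_cos (by rwa [uIcc_of_le (by linarith [pi_pos])] at hα),
    intervalIntegral.integral_const_mul, integral_comp_div cos two_ne_zero, integral_cos, neg_div,
    sin_neg, sin_pi_div_two]
  norm_num

/-- The action `I₀(e)` of the pendulum, with the formula extended to every `e`. -/
noncomputable def pendulumAction (e : ℝ) : ℝ :=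
  (1 / π) * ∫ α in (-arccos (1 - e))..(arccos (1 - e)), √(2 * (e - 1 + cos α))

theorem continuous_pendulumAction : Continuous pendulumAction := by
  have hbound : Continuous fun e : ℝ ↦ arccos (1 - e) := continuous_arccos.comp (by fun_prop)
  refine continuous_const.mul
    (intervalIntegral.continuous_parametric_of_continuous_bounds ?_ hbound.neg hbound)
  exact continuous_sqrt.comp (by fun_prop)

theorem pendulumAction_of_two_le {e : ℝ} (he : 2 ≤ e) :
    pendulumAction e = (1 / π) * ∫ α in (-π)..π, √(2 * (e - 1 + cos α)) := by
  rw [pendulumAction, arccos_eq_pi.mpr (by linarith)]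

theorem pendulumAction_two : pendulumAction 2 = 8 / π := by
  rw [pendulumAction_of_two_le le_rfl, ← integral_sqrt_two_mul_one_add_cos]
  norm_num [div_eq_inv_mul]

/-- The total action `I : (0,∞) → ℝ`, equal to `I₀(e)` for `0 < e < 2`, to `8/π` at `e = 2`,
and to `2 I±(e)` for `e > 2`, is continuous at `e = 2`, and hence continuous on `(0,∞)`. -/
theorem stmt_7 (I : ℝ → ℝ)
    (h0 : ∀ e ∈ Set.Ioo (0 : ℝ) 2,
      I e = (1 / Real.pi) *
        ∫ α in (-Real.arccos (1 - e))..(Real.arccos (1 - e)),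
          Real.sqrt (2 * (e - 1 + Real.cos α)))
    (h2 : I 2 = 8 / Real.pi)
    (hp : ∀ e : ℝ, 2 < e →
      I e = 2 * ((1 / (2 * Real.pi)) *
        ∫ α in (-Real.pi)..Real.pi, Real.sqrt (2 * (e - 1 + Real.cos α)))) :
    ContinuousAt I 2 ∧ ContinuousOn I (Set.Ioi 0) := by
  have hI : EqOn I pendulumAction (Ioi 0) := by
    intro e (he : 0 < e)
    rcases lt_trichotomy e 2 with hlt | rfl | hgt
    · exact h0 e ⟨he, hlt⟩
    · rw [h2, pendulumAction_two]
    · rw [hp e hgt, pendulumAction_of_two_le hgt.le]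
      field_simp
  have hcont : ContinuousOn I (Ioi 0) := continuous_pendulumAction.continuousOn.congr hI
  exact ⟨hcont.continuousAt (Ioi_mem_nhds two_pos), hcont⟩
end

section
/- For every e with 0 < e < 2, the reduced action satisfies Ĩ(e) = (1/2) I₀(e), and for every e > 2 it satisfies Ĩ(e) = I±(e). Consequently the Bohr–Sommerfeld condition Ĩ(e) = Mℏ for the reduced system corresponds, upon reconstruction, to the condition I(e) = 2Mℏ for the unreduced pendulum, i.e. to the even quantum spectrum. -/
/-!
Substituting `t = cos α` turns the reduced action into `(1/π) ∫₀^{b} √(2(e - 1 + cos α)) dα`,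
where `cos b` is the lower limit of the `t`-integral: `b = α⁺(e)` for `e < 2` and `b = π`
for `e > 2`. Since the pendulum integrand is even in `α`, this is half of the integral over
`[-b, b]`, i.e. `½ I₀(e)`, respectively `I±(e)`. The Bohr–Sommerfeld correspondence then follows
from `I = I₀` below the separatrix and `I = 2 I±` above it.
-/

open Real MeasureTheory Set intervalIntegral

lemma Real.cos_image_Icc_zero {b : ℝ} (hb0 : 0 ≤ b) (hbπ : b ≤ π) :
    cos '' Icc 0 b = Icc (cos b) 1 := by
  refine Subset.antisymm ?_ ?_
  · rintro _ ⟨x, hx, rfl⟩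
    exact ⟨cos_le_cos_of_nonneg_of_le_pi hx.1 hbπ hx.2, cos_le_one x⟩
  · simpa only [cos_zero] using intermediate_value_Icc' hb0 continuous_cos.continuousOn

/-- No integrability hypothesis is needed: the change of variables formula for an injective
map holds for Bochner integrals whether or not the two sides are integrable. -/
lemma integral_div_sqrt_one_sub_sq_eq_integral_comp_cos (f : ℝ → ℝ) {b : ℝ}
    (hb0 : 0 ≤ b) (hbπ : b ≤ π) :
    ∫ t in cos b..1, f t / √(1 - t ^ 2) = ∫ α in 0..b, f (cos α) := by
  have hsqrt : ∀ α ∈ Ioo 0 b, √(1 - cos α ^ 2) = sin α := fun α hα => by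
    rw [← sin_sq, sqrt_sq (sin_nonneg_of_nonneg_of_le_pi hα.1.le (hα.2.le.trans hbπ))]
  rw [integral_of_le (cos_le_one b), integral_of_le hb0, ← integral_Icc_eq_integral_Ioc,
    ← cos_image_Icc_zero hb0 hbπ,
    integral_image_eq_integral_abs_deriv_smul measurableSet_Icc
      (fun x _ => (hasDerivAt_cos x).hasDerivWithinAt) (injOn_cos.mono (Icc_subset_Icc_right hbπ)),
    integral_Icc_eq_integral_Ioo, integral_Ioc_eq_integral_Ioo]
  refine setIntegral_congr_fun measurableSet_Ioo fun α hα => ?_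
  have hsin : 0 < sin α := sin_pos_of_pos_of_lt_pi hα.1 (hα.2.trans_le hbπ)
  rw [hsqrt α hα, abs_neg, abs_of_pos hsin, smul_eq_mul, mul_div_cancel₀ _ hsin.ne']
lemma integral_neg_self_of_even {φ : ℝ → ℝ} (hφ : ∀ x, φ (-x) = φ x) {b : ℝ}
    (hi : IntervalIntegrable φ volume 0 b) :
    ∫ x in -b..b, φ x = 2 * ∫ x in 0..b, φ x := by
  have hneg : ∫ x in -b..0, φ x = ∫ x in 0..b, φ x := by
    simpa only [hφ, neg_zero] using (integral_comp_neg (a := 0) (b := b) (f := φ)).symm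
  have hi' : IntervalIntegrable φ volume (-b) 0 := by
    simpa only [hφ, neg_zero] using ((IntervalIntegrable.iff_comp_neg (by simp)).1 hi).symm
  rw [← integral_add_adjacent_intervals hi' hi, hneg, two_mul]

lemma integral_sqrt_div_sqrt_one_sub_sq_eq_half_integral (e : ℝ) {b : ℝ} (hb0 : 0 ≤ b)
    (hbπ : b ≤ π) :
    ∫ t in cos b..1, √(2 * (e + t - 1)) / √(1 - t ^ 2) =
      1 / 2 * ∫ α in -b..b, √(2 * (e - 1 + cos α)) := by
  have hcont : Continuous fun α => √(2 * (e - 1 + cos α)) := by fun_prop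
  rw [integral_div_sqrt_one_sub_sq_eq_integral_comp_cos _ hb0 hbπ,
    integral_neg_self_of_even (fun α => by rw [cos_neg]) (hcont.intervalIntegrable 0 b)]
  simp_rw [add_sub_right_comm e]
  ring

/-- The reduced action satisfies `Ĩ(e) = ½ I₀(e)` for `0 < e < 2` and `Ĩ(e) = I±(e)` for
`e > 2`; consequently the reduced Bohr–Sommerfeld condition `Ĩ(e) = Mℏ` corresponds, upon
reconstruction, to `I(e) = 2Mℏ` for the unreduced pendulum, i.e. to the even quantum
spectrum. -/
theorem stmt_17 (I₀ Ipm Itil I : ℝ → ℝ)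
    (hI₀ : ∀ e : ℝ, I₀ e = (1 / Real.pi) *
      ∫ α in (-Real.arccos (1 - e))..(Real.arccos (1 - e)),
        Real.sqrt (2 * (e - 1 + Real.cos α)))
    (hIpm : ∀ e : ℝ, Ipm e = (1 / (2 * Real.pi)) *
      ∫ α in (-Real.pi)..Real.pi, Real.sqrt (2 * (e - 1 + Real.cos α)))
    (hItil : ∀ e : ℝ, Itil e = (1 / Real.pi) *
      ∫ t in (max (1 - e) (-1))..1, Real.sqrt (2 * (e + t - 1)) / Real.sqrt (1 - t ^ 2))
    (hIlt : ∀ e : ℝ, 0 < e → e < 2 → I e = I₀ e)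
    (hIgt : ∀ e : ℝ, 2 < e → I e = 2 * Ipm e) :
    (∀ e : ℝ, 0 < e → e < 2 → Itil e = (1 / 2) * I₀ e) ∧
    (∀ e : ℝ, 2 < e → Itil e = Ipm e) ∧
    (∀ (hbar : ℝ) (M : ℤ) (e : ℝ), 0 < e → e ≠ 2 →
      (Itil e = M * hbar ↔ I e = 2 * M * hbar)) := by
  have librating : ∀ e : ℝ, 0 < e → e < 2 → Itil e = 1 / 2 * I₀ e := by
    intro e he he2
    have h := integral_sqrt_div_sqrt_one_sub_sq_eq_half_integral e (arccos_nonneg (1 - e))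
      (arccos_le_pi (1 - e))
    rw [cos_arccos (by linarith) (by linarith)] at h
    rw [hItil, hI₀, max_eq_left (by linarith), h]
    ring
  have rotating : ∀ e : ℝ, 2 < e → Itil e = Ipm e := by
    intro e he
    have h := integral_sqrt_div_sqrt_one_sub_sq_eq_half_integral e pi_pos.le le_rfl
    rw [cos_pi] at h
    rw [hItil, hIpm, max_eq_right (by linarith), h]
    ring
  refine ⟨librating, rotating, fun hbar M e he he2 => ?_⟩
  rcases he2.lt_or_gt with he2 | he2
  · rw [librating e he he2, hIlt e he he2]
    constructor <;> intro h <;> linarith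
  · rw [rotating e he2, hIgt e he2]
    constructor <;> intro h <;> linarith
end

section
/- Let ς: (ℝ² ∖ {0}) × (ℝ × (ℝ/2πℤ)) → ℝ⁸ be given by ς((x,y),(p,α)) = (cos α, p sin α, p²/2 − cos α + 1, x², y², xy, xp, yp). Then the image under ς of the set L^∨ = {((x,y),(p,α)) : (x,y) ≠ (0,0) and p ≠ 0} is exactly the set 𝒫^∨ of all (τ,σ) ∈ ℝ³ × ℝ⁵ satisfying the relations (1/2)τ₂² = (τ₁ + τ₃ − 1)(1 − τ₁²), σ₃² = σ₁σ₂, (1/2)σ₄² = (τ₁ + τ₃ − 1)σ₁, (1/2)σ₅² = (τ₁ + τ₃ − 1)σ₂, (1/2)σ₄σ₅ = (τ₁ + τ₃ − 1)σ₃, together with |τ₁| ≤ 1, τ₃ ≥ 0, σ₁ ≥ 0, σ₂ ≥ 0, and τ₁ + τ₃ − 1 ≠ 0, (σ₁,σ₂,σ₃) ≠ (0,0,0), (σ₄,σ₅) ≠ (0,0). -/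
/-!
Write `c = τ₁ + τ₃ - 1`. On the image of `ς` one has `c = p² / 2`, and every relation becomes an
identity in `x, y, p, α`. Conversely, the relations for `σ₄, σ₅` force `c > 0`, so `p = √(2c)` is
a nonzero square root; then `x = σ₄ / p`, `y = σ₅ / p` and an angle with `cos α = τ₁`,
`sin α = τ₂ / p` (which lies on the unit circle by the first relation) give a preimage.
-/

open Real

lemma Real.Angle.exists_cos_eq_sin_eq {a b : ℝ} (h : a ^ 2 + b ^ 2 = 1) :
    ∃ α : Angle, α.cos = a ∧ α.sin = b := by
  set z : ℂ := ⟨a, b⟩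
  have hz : ‖z‖ = 1 := by simp [Complex.norm_eq_sqrt_sq_add_sq, z, h]
  have hz0 : z ≠ 0 := norm_ne_zero_iff.mp (by simp [hz])
  refine ⟨z.arg, ?_, ?_⟩
  · rw [Angle.cos_coe, Complex.cos_arg hz0, hz, div_one]
  · rw [Angle.sin_coe, Complex.sin_arg, hz, div_one]

lemma Real.Angle.abs_cos_le_one (α : Angle) : |α.cos| ≤ 1 :=
  (sq_le_one_iff_abs_le_one _).1 (by nlinarith [α.cos_sq_add_sin_sq, sq_nonneg α.sin])

lemma pos_of_half_sq_eq_mul {c a b s t : ℝ} (hs : 1 / 2 * s ^ 2 = c * a)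
    (ht : 1 / 2 * t ^ 2 = c * b) (ha : 0 ≤ a) (hb : 0 ≤ b) (hst : (s, t) ≠ (0, 0)) : 0 < c := by
  by_contra! hc
  have hs0 : s = 0 := pow_eq_zero_iff two_ne_zero |>.1 <| by nlinarith [sq_nonneg s]
  have ht0 : t = 0 := pow_eq_zero_iff two_ne_zero |>.1 <| by nlinarith [sq_nonneg t]
  exact hst (by rw [hs0, ht0])

noncomputable def hilbertMap : (ℝ × ℝ) × (ℝ × Angle) → (ℝ × ℝ × ℝ) × (ℝ × ℝ × ℝ × ℝ × ℝ)
  | ((x, y), (p, α)) =>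
    ((α.cos, p * α.sin, p ^ 2 / 2 - α.cos + 1), (x ^ 2, y ^ 2, x * y, x * p, y * p))

/-- The set `L^∨` of the paper. -/
def regularLocus : Set ((ℝ × ℝ) × (ℝ × Angle)) := {w | w.1 ≠ (0, 0) ∧ w.2.1 ≠ 0}

/-- The set `𝒫^∨` of the paper. -/
def regularOrbitSpace : Set ((ℝ × ℝ × ℝ) × (ℝ × ℝ × ℝ × ℝ × ℝ)) :=
  {v | ∃ τ1 τ2 τ3 σ1 σ2 σ3 σ4 σ5 : ℝ,
    v = ((τ1, τ2, τ3), (σ1, σ2, σ3, σ4, σ5)) ∧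
    (1 / 2) * τ2 ^ 2 = (τ1 + τ3 - 1) * (1 - τ1 ^ 2) ∧
    σ3 ^ 2 = σ1 * σ2 ∧
    (1 / 2) * σ4 ^ 2 = (τ1 + τ3 - 1) * σ1 ∧
    (1 / 2) * σ5 ^ 2 = (τ1 + τ3 - 1) * σ2 ∧
    (1 / 2) * (σ4 * σ5) = (τ1 + τ3 - 1) * σ3 ∧
    |τ1| ≤ 1 ∧ 0 ≤ τ3 ∧ 0 ≤ σ1 ∧ 0 ≤ σ2 ∧
    τ1 + τ3 - 1 ≠ 0 ∧
    (σ1, σ2, σ3) ≠ ((0 : ℝ), (0 : ℝ), (0 : ℝ)) ∧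
    (σ4, σ5) ≠ ((0 : ℝ), (0 : ℝ))}

lemma mapsTo_hilbertMap_regularLocus : Set.MapsTo hilbertMap regularLocus regularOrbitSpace := by
  rintro ⟨⟨x, y⟩, p, α⟩ ⟨hxy, hp⟩
  have hc : α.cos + (p ^ 2 / 2 - α.cos + 1) - 1 = p ^ 2 / 2 := by ring
  refine ⟨_, _, _, _, _, _, _, _, rfl, ?_, by ring, ?_, ?_, ?_, α.abs_cos_le_one, ?_,
    sq_nonneg x, sq_nonneg y, ?_, ?_, ?_⟩
  · rw [hc]; linear_combination p ^ 2 / 2 * α.cos_sq_add_sin_sq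
  · rw [hc]; ring
  · rw [hc]; ring
  · rw [hc]; ring
  · linarith [(abs_le.1 α.abs_cos_le_one).2, sq_nonneg p]
  · rw [hc]; positivity
  · intro h
    simp only [Prod.mk.injEq, pow_eq_zero_iff two_ne_zero] at h
    exact hxy (by rw [h.1, h.2.1])
  · intro h
    simp only [Prod.mk.injEq, mul_eq_zero, hp, or_false] at h
    exact hxy (by rw [h.1, h.2])

lemma regularOrbitSpace_subset_image_hilbertMap :
    regularOrbitSpace ⊆ hilbertMap '' regularLocus := by
  rintro _ ⟨τ1, τ2, τ3, σ1, σ2, σ3, σ4, σ5, rfl, hτ2, -, hσ4, hσ5, hσ45, -, -, hσ1, hσ2, -, -,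
    hσ45_ne⟩
  have hc : 0 < τ1 + τ3 - 1 := pos_of_half_sq_eq_mul hσ4 hσ5 hσ1 hσ2 hσ45_ne
  set p := √(2 * (τ1 + τ3 - 1))
  have hp_sq : p ^ 2 = 2 * (τ1 + τ3 - 1) := sq_sqrt (by positivity)
  have hp : p ≠ 0 := (sqrt_pos.2 (by positivity)).ne'
  obtain ⟨α, hcos, hsin⟩ := Angle.exists_cos_eq_sin_eq (a := τ1) (b := τ2 / p) <| by
    field_simp
    linear_combination 2 * hτ2 - (1 - τ1 ^ 2) * hp_sq
  refine ⟨((σ4 / p, σ5 / p), (p, α)), ⟨?_, hp⟩, ?_⟩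
  · simpa [Prod.mk.injEq, hp] using hσ45_ne
  · simp only [hilbertMap, hcos, hsin, Prod.mk.injEq]
    refine ⟨⟨trivial, by field_simp, by linear_combination hp_sq / 2⟩, ?_, ?_, ?_, ?_, ?_⟩
    · field_simp; linear_combination 2 * hσ4 - σ1 * hp_sq
    · field_simp; linear_combination 2 * hσ5 - σ2 * hp_sq
    · field_simp; linear_combination 2 * hσ45 - σ3 * hp_sq
    · field_simp
    · field_simp

lemma image_hilbertMap_regularLocus : hilbertMap '' regularLocus = regularOrbitSpace :=
  (Set.mapsTo_iff_image_subset.1 mapsTo_hilbertMap_regularLocus).antisymm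
    regularOrbitSpace_subset_image_hilbertMap

/-- The Hilbert (orbit) map `ς` of the ℤ₂-action on the prequantum line bundle
`L = ℂ × T*S¹` (−1-representation) sends the set `L^∨ = {(x,y) ≠ 0, p ≠ 0}` exactly onto the
smooth part `𝒫^∨` of the orbit space, described by the invariants' relations together with
`|τ₁| ≤ 1`, `τ₃ ≥ 0`, `σ₁,σ₂ ≥ 0`, `τ₁ + τ₃ − 1 ≠ 0`, `(σ₁,σ₂,σ₃) ≠ 0`, `(σ₄,σ₅) ≠ 0`. -/
theorem stmt_19
    (ς : (ℝ × ℝ) × (ℝ × Real.Angle) → (ℝ × ℝ × ℝ) × (ℝ × ℝ × ℝ × ℝ × ℝ))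
    (hς : ∀ (x y p : ℝ) (α : Real.Angle),
      ς ((x, y), (p, α)) =
        ((α.cos, p * α.sin, p ^ 2 / 2 - α.cos + 1),
         (x ^ 2, y ^ 2, x * y, x * p, y * p))) :
    ς '' {w : (ℝ × ℝ) × (ℝ × Real.Angle) | w.1 ≠ (0, 0) ∧ w.2.1 ≠ 0} =
      {v : (ℝ × ℝ × ℝ) × (ℝ × ℝ × ℝ × ℝ × ℝ) |
        ∃ τ1 τ2 τ3 σ1 σ2 σ3 σ4 σ5 : ℝ,
          v = ((τ1, τ2, τ3), (σ1, σ2, σ3, σ4, σ5)) ∧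
          (1 / 2) * τ2 ^ 2 = (τ1 + τ3 - 1) * (1 - τ1 ^ 2) ∧
          σ3 ^ 2 = σ1 * σ2 ∧
          (1 / 2) * σ4 ^ 2 = (τ1 + τ3 - 1) * σ1 ∧
          (1 / 2) * σ5 ^ 2 = (τ1 + τ3 - 1) * σ2 ∧
          (1 / 2) * (σ4 * σ5) = (τ1 + τ3 - 1) * σ3 ∧
          |τ1| ≤ 1 ∧ 0 ≤ τ3 ∧ 0 ≤ σ1 ∧ 0 ≤ σ2 ∧
          τ1 + τ3 - 1 ≠ 0 ∧
          (σ1, σ2, σ3) ≠ ((0 : ℝ), (0 : ℝ), (0 : ℝ)) ∧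
          (σ4, σ5) ≠ ((0 : ℝ), (0 : ℝ))} := by
  obtain rfl : ς = hilbertMap := funext fun ⟨⟨x, y⟩, p, α⟩ => hς x y p α
  exact image_hilbertMap_regularLocus
end
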